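/- Fix Δx > 0, Δt > 0, λ ∈ ℝ and an integer M ≥ 1. Let u : ℤ × ℤ → ℝ be a grid function with u(m + M, n) = u(m, n) for all (m,n) (spatial M-periodicity), and suppose u satisfies the EC₈(λ) scheme at every point: D_m F̃₁ + D_n(μ_m u_{-1,0}) = 0, where F̃₁ = (1/3)·(μ_n μ_m² u_{-2,0})·μ_n((μ_m² u_{-2,0})²) + D_m²μ_n u_{-2,0} + λ·D_n D_m μ_m u_{-2,0}. Then the discrete mass Σ_{i=0}^{M−1} (μ_m u_{-1,0})(i, n) is independent of n. -/

import Mathlib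

noncomputable section

/-- Shift operator: `(Sh i j u)(m,n) = u(m+i, n+j)`. -/
def Sh (i j : ℤ) (f : ℤ × ℤ → ℝ) : ℤ × ℤ → ℝ := fun p => f (p.1 + i, p.2 + j)

/-- Forward difference in space: `D_m f = (S_m f − f)/Δx`. -/
def Dm (dx : ℝ) (f : ℤ × ℤ → ℝ) : ℤ × ℤ → ℝ := fun p => (f (p.1 + 1, p.2) - f p) / dx

/-- Forward difference in time: `D_n f = (S_n f − f)/Δt`. -/
def Dn (dt : ℝ) (f : ℤ × ℤ → ℝ) : ℤ × ℤ → ℝ := fun p => (f (p.1, p.2 + 1) - f p) / dt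

/-- Forward average in space: `μ_m f = (S_m f + f)/2`. -/
def μm (f : ℤ × ℤ → ℝ) : ℤ × ℤ → ℝ := fun p => (f (p.1 + 1, p.2) + f p) / 2

/-- Forward average in time: `μ_n f = (S_n f + f)/2`. -/
def μn (f : ℤ × ℤ → ℝ) : ℤ × ℤ → ℝ := fun p => (f (p.1, p.2 + 1) + f p) / 2

/-- Discrete flux `F̃₁` of the EC₈(λ) scheme. -/
def F1EC8 (dx dt lam : ℝ) (u : ℤ × ℤ → ℝ) : ℤ × ℤ → ℝ :=
  (1/3 : ℝ) • (μn (μm (μm (Sh (-2) 0 u))) * μn ((μm (μm (Sh (-2) 0 u))) ^ 2))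
    + Dm dx (Dm dx (μn (Sh (-2) 0 u)))
    + lam • Dn dt (Dm dx (μm (Sh (-2) 0 u)))

section Aux
variable (M : ℤ)

def Per (M : ℤ) (f : ℤ × ℤ → ℝ) : Prop := ∀ m n : ℤ, f (m + M, n) = f (m, n)

lemma Per.sh {f} (hf : Per M f) (i j : ℤ) : Per M (Sh i j f) := by
  intro m n; simp only [Sh]
  rw [show m + M + i = (m + i) + M by ring, hf]

lemma Per.mm {f} (hf : Per M f) : Per M (μm f) := by
  intro m n; simp only [μm]
  rw [show m + M + 1 = (m + 1) + M by ring, hf, hf]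

lemma Per.mn {f} (hf : Per M f) : Per M (μn f) := by
  intro m n; simp only [μn]; rw [hf, hf]

lemma Per.dm {f} (dx : ℝ) (hf : Per M f) : Per M (Dm dx f) := by
  intro m n; simp only [Dm]
  rw [show m + M + 1 = (m + 1) + M by ring, hf, hf]

lemma Per.dn {f} (dt : ℝ) (hf : Per M f) : Per M (Dn dt f) := by
  intro m n; simp only [Dn]; rw [hf, hf]

lemma Per.add {f g} (hf : Per M f) (hg : Per M g) : Per M (f + g) := by
  intro m n; simp only [Pi.add_apply]; rw [hf m n, hg m n]

lemma Per.mul {f g} (hf : Per M f) (hg : Per M g) : Per M (f * g) := by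
  intro m n; simp only [Pi.mul_apply]; rw [hf m n, hg m n]

lemma Per.smul {f} (c : ℝ) (hf : Per M f) : Per M (c • f) := by
  intro m n; simp only [Pi.smul_apply]; rw [hf m n]

lemma Per.pow {f} (k : ℕ) (hf : Per M f) : Per M (f ^ k) := by
  intro m n; simp only [Pi.pow_apply]; rw [hf m n]

lemma Per.f1 (dx dt lam : ℝ) {u} (hu : Per M u) : Per M (F1EC8 dx dt lam u) := by
  unfold F1EC8
  exact (((((hu.sh M (-2) 0).mm M).mm M).mn M).mul M
          ((((((hu.sh M (-2) 0).mm M).mm M).pow M 2).mn M)) |>.smul M (1/3)).add M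
    ((((hu.sh M (-2) 0).mn M).dm M dx).dm M dx) |>.add M
    (((((hu.sh M (-2) 0).mm M).dm M dx).dn M dt).smul M lam)

end Aux

/-- Spatially periodic solutions of the EC₈(λ) scheme conserve the discrete mass. -/
theorem EC8_discrete_mass_invariant (dx dt lam : ℝ) (hdx : 0 < dx) (hdt : 0 < dt)
    (M : ℕ) (hM : 1 ≤ M) (u : ℤ × ℤ → ℝ)
    (hper : ∀ m n : ℤ, u (m + (M : ℤ), n) = u (m, n))
    (hscheme : ∀ p : ℤ × ℤ,
      (Dm dx (F1EC8 dx dt lam u) + Dn dt (μm (Sh (-1) 0 u))) p = 0) :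
    ∀ n₁ n₂ : ℤ,
      (∑ i ∈ Finset.range M, μm (Sh (-1) 0 u) ((i : ℤ), n₁))
        = ∑ i ∈ Finset.range M, μm (Sh (-1) 0 u) ((i : ℤ), n₂) := by

  -- setup
  set v := μm (Sh (-1) 0 u) with hv
  set F := F1EC8 dx dt lam u with hF
  have hperF : Per (M:ℤ) F := Per.f1 (M:ℤ) dx dt lam (fun m n => hper m n)
  have hstep : ∀ n : ℤ,
      (∑ i ∈ Finset.range M, v ((i : ℤ), n + 1)) = ∑ i ∈ Finset.range M, v ((i : ℤ), n) := by
    intro n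
    have hdiff : ∀ i : ℤ, v (i, n + 1) - v (i, n) = -(dt/dx) * (F (i + 1, n) - F (i, n)) := by
      intro i
      have h := hscheme (i, n)
      simp only [Pi.add_apply, Dm, Dn] at h
      have h1 : v (i, n + 1) - v (i, n) = -dt * ((F (i + 1, n) - F (i, n)) / dx) := by
        have := sub_eq_zero.mpr (eq_neg_of_add_eq_zero_right h).symm
        field_simp at this ⊢
        linarith [this]
      rw [h1]; field_simp; try ring
    have htel : (∑ i ∈ Finset.range M, (v ((i:ℤ), n + 1) - v ((i:ℤ), n)))
        = -(dt/dx) * (F ((M:ℤ), n) - F (0, n)) := by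
      have : ∀ i ∈ Finset.range M,
          v ((i:ℤ), n + 1) - v ((i:ℤ), n)
            = -(dt/dx) * (F (((i+1 : ℕ):ℤ), n) - F ((i:ℤ), n)) := by
        intro i _
        rw [hdiff (i:ℤ)]; try norm_cast
      rw [Finset.sum_congr rfl this, ← Finset.mul_sum,
        Finset.sum_range_sub (fun i => F ((i:ℤ), n))]
      norm_num
    have hFper : F ((M:ℤ), n) = F (0, n) := by
      have := hperF 0 n; simpa using this
    rw [Finset.sum_sub_distrib] at htel
    rw [hFper] at htel
    simp at htel
    linarith [htel]
  have hall : ∀ n : ℤ, (∑ i ∈ Finset.range M, v ((i:ℤ), n)) = ∑ i ∈ Finset.range M, v ((i:ℤ), 0) := by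
    intro n
    induction n using Int.induction_on with
    | zero => rfl
    | succ k ih => rw [hstep k]; exact ih
    | pred k ih =>
      have := hstep (-(k:ℤ) - 1)
      rw [show (-(k:ℤ) - 1) + 1 = -(k:ℤ) by ring] at this
      rw [← this]; exact ih
  intro n₁ n₂
  rw [hall n₁, hall n₂]
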